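/- Relation (iv) of the generalized-tie relations: for every n ≥ 2 and all indices 1 ≤ i and i+1 < j ≤ n, the equality σ_{j−1} η_{i,j} = η_{i,j−1} σ_{j−1} holds in the tied braid monoid TM_n. -/

import Mathlib

/-!
The tied braid monoid `TM n` (n ≥ 2), presented by generators
σ_1,…,σ_{n−1}, σ_1⁻¹,…,σ_{n−1}⁻¹, η_1,…,η_{n−1} subject to the relations:
σ_i σ_i⁻¹ = σ_i⁻¹ σ_i = 1; σ_i σ_{i+1} σ_i = σ_{i+1} σ_i σ_{i+1};
σ_i σ_j = σ_j σ_i for |i−j| ≥ 2; η_i η_j = η_j η_i for all i, j;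
η_i σ_i = σ_i η_i; η_i σ_j = σ_j η_i for |i−j| ≥ 2;
η_i σ_j σ_i^ε = σ_j σ_i^ε η_j for |i−j| = 1, ε = ±1;
η_i η_j σ_i = η_j σ_i η_j = σ_i η_i η_j for |i−j| = 1; η_i² = η_i.
-/

/-- Generators of the tied braid monoid: σ_i, σ_i⁻¹ and η_i for 1 ≤ i ≤ n−1. -/
inductive TMGen (n : ℕ) : Type
  | sig (i : ℕ) (h : 1 ≤ i ∧ i ≤ n - 1) : TMGen n
  | sigInv (i : ℕ) (h : 1 ≤ i ∧ i ≤ n - 1) : TMGen n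
  | eta (i : ℕ) (h : 1 ≤ i ∧ i ≤ n - 1) : TMGen n

/-- The word σ_i in the free monoid on the generators. -/
def wS (n i : ℕ) : FreeMonoid (TMGen n) :=
  if h : 1 ≤ i ∧ i ≤ n - 1 then FreeMonoid.of (TMGen.sig i h) else 1

/-- The word σ_i⁻¹ in the free monoid on the generators. -/
def wSI (n i : ℕ) : FreeMonoid (TMGen n) :=
  if h : 1 ≤ i ∧ i ≤ n - 1 then FreeMonoid.of (TMGen.sigInv i h) else 1

/-- The word η_i in the free monoid on the generators. -/
def wE (n i : ℕ) : FreeMonoid (TMGen n) :=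
  if h : 1 ≤ i ∧ i ≤ n - 1 then FreeMonoid.of (TMGen.eta i h) else 1

/-- The defining relations of the tied braid monoid `TM n`. -/
inductive TMRel (n : ℕ) : FreeMonoid (TMGen n) → FreeMonoid (TMGen n) → Prop
  | inv_right (i : ℕ) (h : 1 ≤ i ∧ i ≤ n - 1) :
      TMRel n (wS n i * wSI n i) 1
  | inv_left (i : ℕ) (h : 1 ≤ i ∧ i ≤ n - 1) :
      TMRel n (wSI n i * wS n i) 1
  | braid (i : ℕ) (h : 1 ≤ i ∧ i + 1 ≤ n - 1) :
      TMRel n (wS n i * wS n (i+1) * wS n i) (wS n (i+1) * wS n i * wS n (i+1))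
  | sig_comm (i j : ℕ) (hi : 1 ≤ i ∧ i ≤ n - 1) (hj : 1 ≤ j ∧ j ≤ n - 1)
      (hij : i + 2 ≤ j ∨ j + 2 ≤ i) :
      TMRel n (wS n i * wS n j) (wS n j * wS n i)
  | eta_comm (i j : ℕ) (hi : 1 ≤ i ∧ i ≤ n - 1) (hj : 1 ≤ j ∧ j ≤ n - 1) :
      TMRel n (wE n i * wE n j) (wE n j * wE n i)
  | eta_sig (i : ℕ) (h : 1 ≤ i ∧ i ≤ n - 1) :
      TMRel n (wE n i * wS n i) (wS n i * wE n i)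
  | eta_sig_far (i j : ℕ) (hi : 1 ≤ i ∧ i ≤ n - 1) (hj : 1 ≤ j ∧ j ≤ n - 1)
      (hij : i + 2 ≤ j ∨ j + 2 ≤ i) :
      TMRel n (wE n i * wS n j) (wS n j * wE n i)
  | eta_slide_pos (i j : ℕ) (hi : 1 ≤ i ∧ i ≤ n - 1) (hj : 1 ≤ j ∧ j ≤ n - 1)
      (hij : j = i + 1 ∨ i = j + 1) :
      TMRel n (wE n i * wS n j * wS n i) (wS n j * wS n i * wE n j)
  | eta_slide_neg (i j : ℕ) (hi : 1 ≤ i ∧ i ≤ n - 1) (hj : 1 ≤ j ∧ j ≤ n - 1)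
      (hij : j = i + 1 ∨ i = j + 1) :
      TMRel n (wE n i * wS n j * wSI n i) (wS n j * wSI n i * wE n j)
  | eta_eta_sig₁ (i j : ℕ) (hi : 1 ≤ i ∧ i ≤ n - 1) (hj : 1 ≤ j ∧ j ≤ n - 1)
      (hij : j = i + 1 ∨ i = j + 1) :
      TMRel n (wE n i * wE n j * wS n i) (wE n j * wS n i * wE n j)
  | eta_eta_sig₂ (i j : ℕ) (hi : 1 ≤ i ∧ i ≤ n - 1) (hj : 1 ≤ j ∧ j ≤ n - 1)
      (hij : j = i + 1 ∨ i = j + 1) :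
      TMRel n (wE n j * wS n i * wE n j) (wS n i * wE n i * wE n j)
  | eta_idem (i : ℕ) (h : 1 ≤ i ∧ i ≤ n - 1) :
      TMRel n (wE n i * wE n i) (wE n i)

/-- The tied braid monoid `TM n`: the quotient of the free monoid on the
generators by the congruence generated by the defining relations. -/
def TM (n : ℕ) := (conGen (TMRel n)).Quotient

instance (n : ℕ) : Monoid (TM n) :=
  inferInstanceAs (Monoid ((conGen (TMRel n)).Quotient))

/-- The generator σ_i of `TM n` (defined for 1 ≤ i ≤ n−1; junk value 1 otherwise). -/
def TM.s (n i : ℕ) : TM n := (conGen (TMRel n)).mk' (wS n i)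

/-- The generator σ_i⁻¹ of `TM n` (defined for 1 ≤ i ≤ n−1; junk value 1 otherwise). -/
def TM.sInv (n i : ℕ) : TM n := (conGen (TMRel n)).mk' (wSI n i)

/-- The generator η_i of `TM n` (defined for 1 ≤ i ≤ n−1; junk value 1 otherwise). -/
def TM.e (n i : ℕ) : TM n := (conGen (TMRel n)).mk' (wE n i)

/-- The generalized tie η_{i,j} = σ_i σ_{i+1} ⋯ σ_{j−2} η_{j−1} σ_{j−2}⁻¹ ⋯ σ_{i+1}⁻¹ σ_i⁻¹,
for 1 ≤ i < j ≤ n (in particular η_{i,i+1} = η_i). -/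
def TM.genTie (n i j : ℕ) : TM n :=
  (((List.range' i (j - 1 - i)).map (TM.s n)).prod) * TM.e n (j - 1) *
    (((List.range' i (j - 1 - i)).reverse.map (TM.sInv n)).prod)

/-!
Write η_{i,j} = w σ_{j−2} η_{j−1} σ_{j−2}⁻¹ w⁻¹ with w = σ_i ⋯ σ_{j−3}, so that
η_{i,j−1} = w η_{j−2} w⁻¹. The generator σ_{j−1} commutes with w and w⁻¹ by far commutation,
and the slide relation η_{j−2} σ_{j−1} σ_{j−2} = σ_{j−1} σ_{j−2} η_{j−1} gives
σ_{j−1} σ_{j−2} η_{j−1} σ_{j−2}⁻¹ = η_{j−2} σ_{j−1}.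
-/

namespace TM

variable {n : ℕ}

theorem mk'_eq_of_rel {a b : FreeMonoid (TMGen n)} (h : TMRel n a b) :
    (conGen (TMRel n)).mk' a = (conGen (TMRel n)).mk' b :=
  (Con.eq _).mpr (ConGen.Rel.of _ _ h)

theorem s_mul_sInv {i : ℕ} (hi : 1 ≤ i ∧ i ≤ n - 1) : s n i * sInv n i = 1 := by
  have h := mk'_eq_of_rel (.inv_right i hi)
  rwa [map_mul, map_one] at h

theorem sInv_mul_s {i : ℕ} (hi : 1 ≤ i ∧ i ≤ n - 1) : sInv n i * s n i = 1 := by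
  have h := mk'_eq_of_rel (.inv_left i hi)
  rwa [map_mul, map_one] at h

def sUnit (i : ℕ) (hi : 1 ≤ i ∧ i ≤ n - 1) : (TM n)ˣ :=
  ⟨s n i, sInv n i, s_mul_sInv hi, sInv_mul_s hi⟩

theorem commute_s_s {k m : ℕ} (hk : 1 ≤ k ∧ k ≤ n - 1) (hm : 1 ≤ m ∧ m ≤ n - 1)
    (hkm : k + 2 ≤ m) : Commute (s n k) (s n m) := by
  have h := mk'_eq_of_rel (.sig_comm k m hk hm (Or.inl hkm))
  rwa [map_mul, map_mul] at h

theorem commute_s_sInv {k m : ℕ} (hk : 1 ≤ k ∧ k ≤ n - 1) (hm : 1 ≤ m ∧ m ≤ n - 1)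
    (hkm : k + 2 ≤ m) : Commute (s n m) (sInv n k) :=
  (commute_s_s hk hm hkm).symm.units_inv_right (u := sUnit k hk)

theorem e_mul_s_succ_mul_s {a : ℕ} (ha : 1 ≤ a ∧ a ≤ n - 1) (ha' : a + 1 ≤ n - 1) :
    e n a * s n (a + 1) * s n a = s n (a + 1) * s n a * e n (a + 1) := by
  have h := mk'_eq_of_rel (.eta_slide_pos a (a + 1) ha ⟨by omega, ha'⟩ (Or.inl rfl))
  rwa [map_mul, map_mul, map_mul, map_mul] at h

theorem s_succ_mul_s_mul_e_succ_mul_sInv {a : ℕ} (ha : 1 ≤ a ∧ a ≤ n - 1)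
    (ha' : a + 1 ≤ n - 1) :
    s n (a + 1) * (s n a * e n (a + 1) * sInv n a) = e n a * s n (a + 1) := by
  calc s n (a + 1) * (s n a * e n (a + 1) * sInv n a)
      = s n (a + 1) * s n a * e n (a + 1) * sInv n a := by simp only [mul_assoc]
    _ = e n a * s n (a + 1) * (s n a * sInv n a) := by
      rw [← e_mul_s_succ_mul_s ha ha', mul_assoc]
    _ = e n a * s n (a + 1) := by rw [s_mul_sInv ha, mul_one]

/-- The braid word σ_i σ_{i+1} ⋯ σ_{a−1}. -/
def sProd (n i a : ℕ) : TM n := ((List.range' i (a - i)).map (s n)).prod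

/-- The braid word σ_{a−1}⁻¹ ⋯ σ_{i+1}⁻¹ σ_i⁻¹. -/
def sInvProd (n i a : ℕ) : TM n := ((List.range' i (a - i)).reverse.map (sInv n)).prod

theorem genTie_succ (i a : ℕ) : genTie n i (a + 1) = sProd n i a * e n a * sInvProd n i a := by
  simp only [genTie, sProd, sInvProd, Nat.add_sub_cancel]

theorem genTie_add_two {i a : ℕ} (hia : i ≤ a) :
    genTie n i (a + 2) = sProd n i a * (s n a * e n (a + 1) * sInv n a) * sInvProd n i a := by
  have hrange : List.range' i (a + 1 - i) = List.range' i (a - i) ++ [a] := by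
    rw [show a + 1 - i = a - i + 1 by omega, List.range'_concat, one_mul, Nat.add_sub_cancel' hia]
  simp only [genTie, sProd, sInvProd, show a + 2 - 1 = a + 1 from rfl, hrange,
    List.reverse_append, List.map_append, List.prod_append, List.reverse_singleton,
    List.map_singleton, List.prod_singleton, mul_assoc]

theorem commute_s_sProd {i a : ℕ} (hi : 1 ≤ i) (ha : a + 1 ≤ n - 1) :
    Commute (s n (a + 1)) (sProd n i a) :=
  Commute.list_prod_right _ _ <| by
    simp only [List.mem_map, List.mem_range'_1]
    rintro _ ⟨k, hk, rfl⟩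
    exact (commute_s_s (by omega) (by omega) (by omega)).symm

theorem commute_s_sInvProd {i a : ℕ} (hi : 1 ≤ i) (ha : a + 1 ≤ n - 1) :
    Commute (s n (a + 1)) (sInvProd n i a) :=
  Commute.list_prod_right _ _ <| by
    simp only [List.mem_map, List.mem_reverse, List.mem_range'_1]
    rintro _ ⟨k, hk, rfl⟩
    exact commute_s_sInv (by omega) (by omega) (by omega)

end TM

theorem tm_genTie_rel_iv_general (n : ℕ) (i j : ℕ)
    (hi : 1 ≤ i) (hij : i + 1 < j) (hj : j ≤ n) :
    TM.s n (j - 1) * TM.genTie n i j = TM.genTie n i (j - 1) * TM.s n (j - 1) := by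
  obtain ⟨a, rfl⟩ : ∃ a, j = a + 2 := ⟨j - 2, by omega⟩
  have ha : 1 ≤ a ∧ a ≤ n - 1 := by omega
  have ha' : a + 1 ≤ n - 1 := by omega
  rw [show a + 2 - 1 = a + 1 from rfl, TM.genTie_add_two (by omega), TM.genTie_succ]
  calc TM.s n (a + 1) * (TM.sProd n i a * (TM.s n a * TM.e n (a + 1) * TM.sInv n a) *
        TM.sInvProd n i a)
      = TM.sProd n i a * (TM.s n (a + 1) * (TM.s n a * TM.e n (a + 1) * TM.sInv n a)) *
          TM.sInvProd n i a := by
        rw [← mul_assoc, ← mul_assoc, (TM.commute_s_sProd hi ha').eq]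
        simp only [mul_assoc]
    _ = TM.sProd n i a * TM.e n a * (TM.s n (a + 1) * TM.sInvProd n i a) := by
        rw [TM.s_succ_mul_s_mul_e_succ_mul_sInv ha ha']
        simp only [mul_assoc]
    _ = TM.sProd n i a * TM.e n a * TM.sInvProd n i a * TM.s n (a + 1) := by
        rw [(TM.commute_s_sInvProd hi ha').eq]
        simp only [mul_assoc]

/-- **Relation (iv) of the generalized-tie relations**: for every n ≥ 2 and indices
1 ≤ i with i+1 < j ≤ n, σ_{j−1} η_{i,j} = η_{i,j−1} σ_{j−1} holds in `TM n`. -/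
theorem tm_genTie_rel_iv (n : ℕ) (hn : 2 ≤ n) (i j : ℕ)
    (hi : 1 ≤ i) (hij : i + 1 < j) (hj : j ≤ n) :
    TM.s n (j - 1) * TM.genTie n i j = TM.genTie n i (j - 1) * TM.s n (j - 1) :=
  tm_genTie_rel_iv_general n i j hi hij hj
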